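/- For a monoid S the following are equivalent: (i) every InC-injective right S-act is InD-injective; (ii) every InC-injective right S-act is PInD-injective; (iii) every InC-injective right S-act is injective; (iv) S is not left reversible or S contains a left zero; (v) every indecomposable component of every injective right S-act is injective; (vi) every indecomposable component of every injective right S-act is InD-injective. -/
import Mathlib


universe u

/-- A right `S`-act structure on a nonempty type `A`: a right action of the monoid `S`. -/
class RightAct (S : Type u) [Monoid S] (A : Type u) : Type u where
  act : A → S → A
  act_one : ∀ a : A, act a 1 = a
  act_mul : ∀ (a : A) (s t : S), act (act a s) t = act a (s * t)
  nonempty : Nonempty A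

infixl:70 " ⊛ " => RightAct.act

/-- `S` is left reversible: every two right ideals (equiv. principal ones) intersect. -/
def LeftReversible (S : Type u) [Monoid S] : Prop :=
  ∀ a b : S, ∃ u v : S, a * u = b * v

/-- A left zero element of the monoid `S`. -/
def IsLeftZero (S : Type u) [Monoid S] (z : S) : Prop :=
  ∀ s : S, z * s = z

/-- `f : A → B` is a homomorphism of right `S`-acts. -/
def IsActHom (S : Type u) [Monoid S] {A B : Type u} [RightAct S A] [RightAct S B]
    (f : A → B) : Prop :=
  ∀ (a : A) (s : S), f (a ⊛ s) = f a ⊛ s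

/-- The restriction of `f : A → B` to the subset `C` is a homomorphism of right `S`-acts. -/
def IsActHomOn (S : Type u) [Monoid S] {A B : Type u} [RightAct S A] [RightAct S B]
    (f : A → B) (C : Set A) : Prop :=
  ∀ a ∈ C, ∀ s : S, f (a ⊛ s) = f a ⊛ s

/-- A subact: a nonempty subset closed under the action. -/
def IsSubact (S : Type u) [Monoid S] {A : Type u} [RightAct S A] (C : Set A) : Prop :=
  C.Nonempty ∧ ∀ a ∈ C, ∀ s : S, a ⊛ s ∈ C

/-- A zero element of an act: fixed by the action of every `s ∈ S`. -/
def IsZeroElem (S : Type u) [Monoid S] {A : Type u} [RightAct S A] (θ : A) : Prop :=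
  ∀ s : S, θ ⊛ s = θ

/-- A subset `D` (viewed as an act) is decomposable: it is the disjoint union of two
nonempty subacts. -/
def DecomposableSet (S : Type u) [Monoid S] {A : Type u} [RightAct S A] (D : Set A) : Prop :=
  ∃ B C : Set A, IsSubact S B ∧ IsSubact S C ∧ B ∪ C = D ∧ B ∩ C = ∅

/-- A subset (viewed as an act) is indecomposable. -/
def IndecomposableSet (S : Type u) [Monoid S] {A : Type u} [RightAct S A] (D : Set A) : Prop :=
  ¬ DecomposableSet S D

/-- The act `A` is decomposable. -/
def Decomposable (S : Type u) [Monoid S] (A : Type u) [RightAct S A] : Prop :=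
  DecomposableSet S (Set.univ : Set A)

/-- The act `A` is indecomposable. -/
def Indecomposable (S : Type u) [Monoid S] (A : Type u) [RightAct S A] : Prop :=
  ¬ Decomposable S A

/-- A cyclic act: generated by a single element. -/
def CyclicAct (S : Type u) [Monoid S] (A : Type u) [RightAct S A] : Prop :=
  ∃ a : A, ∀ x : A, ∃ s : S, x = a ⊛ s

/-- `A` is a retract of `B`. -/
def IsRetractOf (S : Type u) [Monoid S] (A B : Type u) [RightAct S A] [RightAct S B] : Prop :=
  ∃ (i : A → B) (p : B → A), IsActHom S i ∧ IsActHom S p ∧ ∀ a : A, p (i a) = a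

/-- `Q` is an injective act: every homomorphism from a subact `C` of any act `B` into `Q`
extends to `B`. -/
def ActInjective (S : Type u) [Monoid S] (Q : Type u) [RightAct S Q] : Prop :=
  ∀ (B : Type u) [RightAct S B], ∀ C : Set B, IsSubact S C →
    ∀ f : B → Q, IsActHomOn S f C →
      ∃ g : B → Q, IsActHom S g ∧ Set.EqOn g f C

/-- `Q` is InC-injective: injective relative to all embeddings into indecomposable acts. -/
def InCInjective (S : Type u) [Monoid S] (Q : Type u) [RightAct S Q] : Prop :=
  ∀ (B : Type u) [RightAct S B], Indecomposable S B → ∀ C : Set B, IsSubact S C →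
    ∀ f : B → Q, IsActHomOn S f C →
      ∃ g : B → Q, IsActHom S g ∧ Set.EqOn g f C

/-- `Q` is InD-injective: injective relative to all embeddings of indecomposable acts. -/
def InDInjective (S : Type u) [Monoid S] (Q : Type u) [RightAct S Q] : Prop :=
  ∀ (B : Type u) [RightAct S B], ∀ C : Set B, IsSubact S C → IndecomposableSet S C →
    ∀ f : B → Q, IsActHomOn S f C →
      ∃ g : B → Q, IsActHom S g ∧ Set.EqOn g f C

/-- `Q` is PInD-injective: every monomorphism from an indecomposable subact extends. -/
def PInDInjective (S : Type u) [Monoid S] (Q : Type u) [RightAct S Q] : Prop :=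
  ∀ (B : Type u) [RightAct S B], ∀ C : Set B, IsSubact S C → IndecomposableSet S C →
    ∀ f : B → Q, IsActHomOn S f C → Set.InjOn f C →
      ∃ g : B → Q, IsActHom S g ∧ Set.EqOn g f C

/-- `A` is quasi injective: homomorphisms from subacts of `A` to `A` extend to `A`. -/
def QuasiInjective (S : Type u) [Monoid S] (A : Type u) [RightAct S A] : Prop :=
  ∀ C : Set A, IsSubact S C → ∀ f : A → A, IsActHomOn S f C →
    ∃ g : A → A, IsActHom S g ∧ Set.EqOn g f C

/-- `A` is pseudo injective: monomorphisms from subacts of any act into `A` extend. -/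
def PseudoInjective (S : Type u) [Monoid S] (A : Type u) [RightAct S A] : Prop :=
  ∀ (C : Type u) [RightAct S C], ∀ B : Set C, IsSubact S B →
    ∀ f : C → A, IsActHomOn S f B → Set.InjOn f B →
      ∃ g : C → A, IsActHom S g ∧ Set.EqOn g f B

/-- A subact `Q` of `A` (viewed as an act in its own right) is injective. -/
def ActInjectiveSet (S : Type u) [Monoid S] {A : Type u} [RightAct S A] (Q : Set A) : Prop :=
  ∀ (B : Type u) [RightAct S B], ∀ C : Set B, IsSubact S C →
    ∀ f : B → A, IsActHomOn S f C → (∀ c ∈ C, f c ∈ Q) →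
      ∃ g : B → A, IsActHom S g ∧ (∀ b : B, g b ∈ Q) ∧ Set.EqOn g f C

/-- A subact `Q` of `A` (viewed as an act in its own right) is InD-injective. -/
def InDInjectiveSet (S : Type u) [Monoid S] {A : Type u} [RightAct S A] (Q : Set A) : Prop :=
  ∀ (B : Type u) [RightAct S B], ∀ C : Set B, IsSubact S C → IndecomposableSet S C →
    ∀ f : B → A, IsActHomOn S f C → (∀ c ∈ C, f c ∈ Q) →
      ∃ g : B → A, IsActHom S g ∧ (∀ b : B, g b ∈ Q) ∧ Set.EqOn g f C

/-- A subact `Q` of `A` (viewed as an act in its own right) is PInD-injective. -/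
def PInDInjectiveSet (S : Type u) [Monoid S] {A : Type u} [RightAct S A] (Q : Set A) : Prop :=
  ∀ (B : Type u) [RightAct S B], ∀ C : Set B, IsSubact S C → IndecomposableSet S C →
    ∀ f : B → A, IsActHomOn S f C → Set.InjOn f C → (∀ c ∈ C, f c ∈ Q) →
      ∃ g : B → A, IsActHom S g ∧ (∀ b : B, g b ∈ Q) ∧ Set.EqOn g f C

/-- The monoid `S` as a right act over itself, by multiplication. -/
instance selfAct (S : Type u) [Monoid S] : RightAct S S where
  act a s := a * s
  act_one := mul_one
  act_mul a s t := mul_assoc a s t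
  nonempty := ⟨1⟩

/-- `Q` is weakly injective: homomorphisms from right ideals of `S` into `Q` extend to `S`. -/
def WeaklyInjective (S : Type u) [Monoid S] (Q : Type u) [RightAct S Q] : Prop :=
  ∀ I : Set S, IsSubact S I → ∀ f : S → Q, IsActHomOn S f I →
    ∃ g : S → Q, IsActHom S g ∧ Set.EqOn g f I

/-- The relation whose equivalence closure has the indecomposable components as classes. -/
def ActRel (S : Type u) [Monoid S] {A : Type u} [RightAct S A] (a b : A) : Prop :=
  ∃ s : S, b = a ⊛ s

/-- The indecomposable component of the element `a` of an act. -/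
def ActComponent (S : Type u) [Monoid S] {A : Type u} [RightAct S A] (a : A) : Set A :=
  {b | Relation.EqvGen (ActRel S) a b}


/-! ### Auxiliary machinery -/

namespace ActTfaeAux

open Relation

variable {S : Type u} [Monoid S]

/-- The indecomposable component of `a`, as an act. -/
instance compAct {A : Type u} [RightAct S A] (a : A) : RightAct S ↥(ActComponent S a) where
  act x s := ⟨x.1 ⊛ s, Relation.EqvGen.trans _ _ _ x.2 (Relation.EqvGen.rel _ _ ⟨s, rfl⟩)⟩
  act_one x := Subtype.ext (RightAct.act_one x.1)
  act_mul x s t := Subtype.ext (RightAct.act_mul x.1 s t)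
  nonempty := ⟨⟨a, Relation.EqvGen.refl a⟩⟩

instance optAct {A : Type u} [RightAct S A] : RightAct S (Option A) where
  act x s := x.map (· ⊛ s)
  act_one x := by cases x <;> simp [RightAct.act_one]
  act_mul x s t := by cases x <;> simp [RightAct.act_mul]
  nonempty := ⟨none⟩

instance funAct : RightAct S (S → S) where
  act f s := fun t => f (s * t)
  act_one f := funext fun t => by show f (1 * t) = f t; rw [one_mul]
  act_mul f s t := funext fun w => by show f (s * (t * w)) = f (s * t * w); rw [mul_assoc]
  nonempty := ⟨fun t => t⟩

lemma hom_eqvGen {A B : Type u} [RightAct S A] [RightAct S B] {f : A → B}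
    (hf : IsActHom S f) {x y : A} (h : Relation.EqvGen (ActRel S) x y) :
    Relation.EqvGen (ActRel S) (f x) (f y) := by
  induction h with
  | rel u v huv => obtain ⟨s, rfl⟩ := huv; exact .rel _ _ ⟨s, hf u s⟩
  | refl u => exact .refl _
  | symm u v _ ih => exact .symm _ _ ih
  | trans u v w _ _ ih1 ih2 => exact .trans _ _ _ ih1 ih2

lemma memsplit {A : Type u} [RightAct S A] {B₁ B₂ : Set A}
    (h1 : ∀ a ∈ B₁, ∀ s : S, a ⊛ s ∈ B₁) (h2 : ∀ a ∈ B₂, ∀ s : S, a ⊛ s ∈ B₂)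
    (huni : B₁ ∪ B₂ = Set.univ) (hint : B₁ ∩ B₂ = ∅)
    {x y : A} (h : Relation.EqvGen (ActRel S) x y) : x ∈ B₁ ↔ y ∈ B₁ := by
  induction h with
  | rel u v huv =>
    obtain ⟨s, rfl⟩ := huv
    constructor
    · exact fun hu => h1 u hu s
    · intro hv
      by_contra hu
      have hu2 : u ∈ B₂ := by
        have hmem : u ∈ B₁ ∪ B₂ := by rw [huni]; exact Set.mem_univ u
        rcases hmem with h | h
        · exact absurd h hu
        · exact h
      have hmem : u ⊛ s ∈ B₁ ∩ B₂ := ⟨hv, h2 u hu2 s⟩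
      rw [hint] at hmem
      exact hmem
  | refl u => exact Iff.rfl
  | symm u v _ ih => exact ih.symm
  | trans u v w _ _ ih1 ih2 => exact ih1.trans ih2

lemma indec_of_allrel {A : Type u} [RightAct S A]
    (h : ∀ x y : A, Relation.EqvGen (ActRel S) x y) : Indecomposable S A := by
  intro hdec
  obtain ⟨B₁, B₂, hB₁, hB₂, huni, hint⟩ := hdec
  obtain ⟨x, hx⟩ := hB₁.1
  obtain ⟨y, hy⟩ := hB₂.1
  have hy1 : y ∈ B₁ := (memsplit hB₁.2 hB₂.2 huni hint (h x y)).mp hx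
  have hmem : y ∈ B₁ ∩ B₂ := ⟨hy1, hy⟩
  rw [hint] at hmem
  exact hmem

lemma allrel_of_indec {A : Type u} [RightAct S A] (h : Indecomposable S A) :
    ∀ x y : A, Relation.EqvGen (ActRel S) x y := by
  intro x y
  by_contra hxy
  apply h
  refine ⟨{w | Relation.EqvGen (ActRel S) x w}, {w | ¬ Relation.EqvGen (ActRel S) x w},
    ⟨⟨x, .refl x⟩, fun w hw s => .trans _ _ _ hw (.rel _ _ ⟨s, rfl⟩)⟩,
    ⟨⟨y, hxy⟩, fun w hw s hws => hw (.trans _ _ _ hws (.symm _ _ (.rel _ _ ⟨s, rfl⟩)))⟩, ?_, ?_⟩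
  · ext w
    simp only [Set.mem_union, Set.mem_setOf_eq, Set.mem_univ, iff_true]
    exact em _
  · ext w
    simp only [Set.mem_inter_iff, Set.mem_setOf_eq, Set.mem_empty_iff_false, iff_false]
    tauto

lemma comp_transfer {A : Type u} [RightAct S A] (a : A) {x y : A}
    (h : Relation.EqvGen (ActRel S) x y) :
    ∀ (hx : x ∈ ActComponent S a) (hy : y ∈ ActComponent S a),
      Relation.EqvGen (ActRel S) (⟨x, hx⟩ : ↥(ActComponent S a)) ⟨y, hy⟩ := by
  induction h with
  | rel u v huv =>
    obtain ⟨s, rfl⟩ := huv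
    intro hu hv
    exact .rel _ _ ⟨s, Subtype.ext rfl⟩
  | refl u => intro hu hv; exact .refl _
  | symm u v _ ih => intro hu hv; exact .symm _ _ (ih hv hu)
  | trans u v w h1 _ ih1 ih2 =>
    intro hu hw
    have hv : v ∈ ActComponent S a := Relation.EqvGen.trans _ _ _ hu h1
    exact .trans _ _ _ (ih1 hu hv) (ih2 hv hw)

lemma comp_indec {A : Type u} [RightAct S A] (a : A) :
    Indecomposable S ↥(ActComponent S a) :=
  indec_of_allrel fun x y => by
    have h : Relation.EqvGen (ActRel S) x.1 y.1 := .trans _ _ _ (.symm _ _ x.2) y.2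
    exact comp_transfer a h x.2 y.2

lemma common_of_eqvGen (hrev : LeftReversible S) {A : Type u} [RightAct S A] {x y : A}
    (h : Relation.EqvGen (ActRel S) x y) : ∃ s t : S, x ⊛ s = y ⊛ t := by
  induction h with
  | rel u v huv => obtain ⟨s, rfl⟩ := huv; exact ⟨s, 1, by rw [RightAct.act_one]⟩
  | refl u => exact ⟨1, 1, rfl⟩
  | symm u v _ ih => obtain ⟨s, t, hst⟩ := ih; exact ⟨t, s, hst.symm⟩
  | trans u v w _ _ ih1 ih2 =>
    obtain ⟨s, t, h1⟩ := ih1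
    obtain ⟨p, q, h2⟩ := ih2
    obtain ⟨c, d, hcd⟩ := hrev t p
    refine ⟨s * c, q * d, ?_⟩
    rw [← RightAct.act_mul, ← RightAct.act_mul, h1, RightAct.act_mul, hcd,
      ← RightAct.act_mul, h2, RightAct.act_mul]

lemma indecSet_of_common {A : Type u} [RightAct S A] {C : Set A}
    (h : ∀ x ∈ C, ∀ y ∈ C, ∃ s t : S, x ⊛ s = y ⊛ t) : IndecomposableSet S C := by
  intro hdec
  obtain ⟨B₁, B₂, hB₁, hB₂, huni, hint⟩ := hdec
  obtain ⟨x, hx⟩ := hB₁.1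
  obtain ⟨y, hy⟩ := hB₂.1
  have hxC : x ∈ C := by rw [← huni]; exact Set.mem_union_left _ hx
  have hyC : y ∈ C := by rw [← huni]; exact Set.mem_union_right _ hy
  obtain ⟨s, t, hst⟩ := h x hxC y hyC
  have h1 := hB₁.2 x hx s
  rw [hst] at h1
  have hmem : y ⊛ t ∈ B₁ ∩ B₂ := ⟨h1, hB₂.2 y hy t⟩
  rw [hint] at hmem
  exact hmem

lemma zero_fun_const {z : S → S} (hz : IsZeroElem S z) (t : S) : z t = z 1 := by
  have h : z (t * 1) = z 1 := congrFun (hz t) 1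
  rwa [mul_one] at h

lemma no_zero_in_comp (hrev : LeftReversible S) (hnz : ∀ z : S, ¬ IsLeftZero S z)
    {z : S → S} (hz : z ∈ ActComponent S (fun t : S => t)) : ¬ IsZeroElem S z := by
  intro hzz
  obtain ⟨s, t, hst⟩ := common_of_eqvGen hrev hz
  apply hnz s
  intro w
  have h1 : s * w = z (t * w) := congrFun hst w
  have h2 : s * 1 = z (t * 1) := congrFun hst 1
  rw [zero_fun_const hzz] at h1
  rw [zero_fun_const hzz, mul_one] at h2
  rw [h1, ← h2]

lemma inj_funAct : ActInjective S (S → S) := by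
  classical
  intro B _ C hC f hf
  refine ⟨fun b => fun s => if h : b ⊛ s ∈ C then f (b ⊛ s) 1 else 1, ?_, ?_⟩
  · intro x t
    funext s
    show (if h : RightAct.act (RightAct.act x t) s ∈ C
          then f (RightAct.act (RightAct.act x t) s) 1 else 1)
       = (if h : RightAct.act x (t * s) ∈ C then f (RightAct.act x (t * s)) 1 else 1)
    rw [RightAct.act_mul]
  · intro c hc
    funext s
    have hcs : c ⊛ s ∈ C := hC.2 c hc s
    show (if h : RightAct.act c s ∈ C then f (RightAct.act c s) 1 else 1) = f c s
    rw [dif_pos hcs, hf c hc s]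
    show f c (s * 1) = f c s
    rw [mul_one]

end ActTfaeAux

namespace ActTfaeAux

variable {S : Type u} [Monoid S]

attribute [local instance] Classical.propDecidable

/-! ### The amalgam used when `S` is not left reversible -/

def NRT (a b : S) : Type u := {t : S // (¬ ∃ u, t = a * u) ∧ ¬ ∃ u, t = b * u}

variable (Q : Type u) [RightAct S Q]

noncomputable def nrNxt (a b : S) (q : Q) (x : S) : Option (Q ⊕ (Q × NRT a b)) :=
  if h1 : ∃ u, x = a * u then some (Sum.inl (q ⊛ x))
  else if h2 : ∃ u, x = b * u then none
  else some (Sum.inr (q, ⟨x, h1, h2⟩))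

noncomputable def nrAct (a b : S) : Option (Q ⊕ (Q × NRT a b)) → S → Option (Q ⊕ (Q × NRT a b))
  | none, _ => none
  | some (Sum.inl q), s => some (Sum.inl (q ⊛ s))
  | some (Sum.inr qt), s => nrNxt Q a b qt.1 (qt.2.1 * s)

noncomputable def nrInst (a b : S) (hab : ∀ u v : S, a * u ≠ b * v) :
    RightAct S (Option (Q ⊕ (Q × NRT a b))) where
  act := nrAct Q a b
  act_one := by
    rintro (_ | (q | ⟨q, t⟩))
    · rfl
    · show some (Sum.inl (q ⊛ 1)) = _
      rw [RightAct.act_one]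
    · show nrNxt Q a b q (t.1 * 1) = some (Sum.inr (q, t))
      rw [mul_one]; simp only [nrNxt]; rw [dif_neg t.2.1, dif_neg t.2.2]
      rfl
  act_mul := by
    rintro (_ | (q | ⟨q, t⟩)) s s'
    · rfl
    · show some (Sum.inl (RightAct.act (RightAct.act q s) s'))
          = some (Sum.inl (RightAct.act q (s * s')))
      rw [RightAct.act_mul]
    · show nrAct Q a b (nrNxt Q a b q (t.1 * s)) s' = nrNxt Q a b q (t.1 * (s * s'))
      rw [← mul_assoc]
      set x := t.1 * s with hx
      by_cases h1 : ∃ u, x = a * u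
      · simp only [nrNxt]; rw [ dif_pos h1]
        show some (Sum.inl (RightAct.act (RightAct.act q x) s')) = nrNxt Q a b q (x * s')
        have h1' : ∃ u, x * s' = a * u := by
          obtain ⟨u, hu⟩ := h1
          exact ⟨u * s', by rw [hu, mul_assoc]⟩
        simp only [nrNxt]; rw [ dif_pos h1', RightAct.act_mul]
      · by_cases h2 : ∃ u, x = b * u
        · simp only [nrNxt]; rw [ dif_neg h1, dif_pos h2]
          show none = nrNxt Q a b q (x * s')
          have h1' : ¬ ∃ u, x * s' = a * u := by
            rintro ⟨u, hu⟩
            obtain ⟨v, hv⟩ := h2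
            exact hab u (v * s') (by rw [← hu, hv, mul_assoc])
          have h2' : ∃ u, x * s' = b * u := by
            obtain ⟨u, hu⟩ := h2
            exact ⟨u * s', by rw [hu, mul_assoc]⟩
          simp only [nrNxt]; rw [ dif_neg h1', dif_pos h2']
        · simp only [nrNxt]; rw [ dif_neg h1, dif_neg h2]
          rfl
  nonempty := ⟨none⟩

variable {Q}

lemma znr (hnr : ¬ LeftReversible S) (hQ : InCInjective S Q) (q0 : Q) :
    ∃ z : Q, Relation.EqvGen (ActRel S) q0 z ∧ IsZeroElem S z := by
  classical
  unfold LeftReversible at hnr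
  push_neg at hnr
  obtain ⟨a, b, hab⟩ := hnr
  letI instNR := nrInst Q a b hab
  have h1a : ¬ ∃ u, (1 : S) = a * u := by
    rintro ⟨u, hu⟩
    exact hab (u * b) 1 (by rw [← mul_assoc, ← hu, one_mul, mul_one])
  have h1b : ¬ ∃ u, (1 : S) = b * u := by
    rintro ⟨u, hu⟩
    exact hab 1 (u * a) (by rw [← mul_assoc, ← hu, one_mul, mul_one])
  let t1 : NRT a b := ⟨1, h1a, h1b⟩
  have rel_inl : ∀ (q : Q) (s : S),
      (some (Sum.inl q) : Option (Q ⊕ (Q × NRT a b))) ⊛ s = some (Sum.inl (q ⊛ s)) :=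
    fun _ _ => rfl
  have relA : ∀ q : Q, (some (Sum.inr (q, t1)) : Option (Q ⊕ (Q × NRT a b))) ⊛ a
      = some (Sum.inl (q ⊛ (1 * a))) := by
    intro q
    show nrNxt Q a b q (1 * a) = _
    have hA : ∃ u, (1 : S) * a = a * u := ⟨1, by rw [one_mul, mul_one]⟩
    simp only [nrNxt]; rw [ dif_pos hA]
  have relB : ∀ q : Q, (some (Sum.inr (q, t1)) : Option (Q ⊕ (Q × NRT a b))) ⊛ b = none := by
    intro q
    show nrNxt Q a b q (1 * b) = none
    have hA : ¬ ∃ u, (1 : S) * b = a * u := by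
      rintro ⟨u, hu⟩
      rw [one_mul] at hu
      exact hab u 1 (by rw [← hu, mul_one])
    have hB : ∃ u, (1 : S) * b = b * u := ⟨1, by rw [one_mul, mul_one]⟩
    simp only [nrNxt]; rw [ dif_neg hA, dif_pos hB]
  have relT : ∀ (q : Q) (t : NRT a b),
      (some (Sum.inr (q, t1)) : Option (Q ⊕ (Q × NRT a b))) ⊛ t.1 = some (Sum.inr (q, t)) := by
    intro q t
    show nrNxt Q a b q (1 * t.1) = _
    rw [one_mul]; simp only [nrNxt]; rw [dif_neg t.2.1, dif_neg t.2.2]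
    rfl
  have hq1 : ∀ q : Q, Relation.EqvGen (ActRel S)
      (some (Sum.inr (q, t1)) : Option (Q ⊕ (Q × NRT a b))) none :=
    fun q => .rel _ _ ⟨b, (relB q).symm⟩
  have hnone : ∀ x : Option (Q ⊕ (Q × NRT a b)), Relation.EqvGen (ActRel S) x none := by
    rintro (_ | (q | ⟨q, t⟩))
    · exact .refl _
    · exact .trans _ _ _ (.rel _ _ ⟨1 * a, (rel_inl q (1 * a)).symm⟩)
        (.trans _ _ _ (.symm _ _ (.rel _ _ ⟨a, (relA q).symm⟩)) (hq1 q))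
    · exact .trans _ _ _ (.symm _ _ (.rel _ _ ⟨t.1, (relT q t).symm⟩)) (hq1 q)
  have hindec : Indecomposable S (Option (Q ⊕ (Q × NRT a b))) :=
    indec_of_allrel fun x y => .trans _ _ _ (hnone x) (.symm _ _ (hnone y))
  have hC : IsSubact S {x : Option (Q ⊕ (Q × NRT a b)) | ∃ q : Q, x = some (Sum.inl q)} := by
    refine ⟨⟨some (Sum.inl q0), q0, rfl⟩, ?_⟩
    rintro x ⟨q, rfl⟩ s
    exact ⟨q ⊛ s, rfl⟩
  have hf : IsActHomOn S (fun x : Option (Q ⊕ (Q × NRT a b)) =>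
      match x with
      | some (Sum.inl q) => q
      | _ => q0) {x | ∃ q : Q, x = some (Sum.inl q)} := by
    rintro x ⟨q, rfl⟩ s
    rfl
  obtain ⟨g, hg, heq⟩ := hQ _ hindec _ hC _ hf
  refine ⟨g none, ?_, fun s => (hg none s).symm⟩
  have h := hom_eqvGen hg (hnone (some (Sum.inl q0)))
  rwa [heq ⟨q0, rfl⟩] at h

lemma zcomb (h4 : ¬ LeftReversible S ∨ ∃ z : S, IsLeftZero S z)
    (hQ : InCInjective S Q) (q0 : Q) :
    ∃ z : Q, Relation.EqvGen (ActRel S) q0 z ∧ IsZeroElem S z := by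
  rcases h4 with h | ⟨z, hz⟩
  · exact znr h hQ q0
  · exact ⟨q0 ⊛ z, .rel _ _ ⟨z, rfl⟩, fun s => by rw [RightAct.act_mul, hz s]⟩

/-! ### Gluing along components: InC-injective with a zero implies injective -/

lemma lemA (hQ : InCInjective S Q) (z : Q) (hz : IsZeroElem S z) : ActInjective S Q := by
  intro B _ C hC f hf
  classical
  have key : ∀ b₀ : B, ∃ g' : ↥(ActComponent S b₀) → Q,
      IsActHom S g' ∧ ∀ x : ↥(ActComponent S b₀), x.1 ∈ C → g' x = f x.1 := by
    intro b₀
    by_cases hmeet : ∃ c ∈ C, c ∈ ActComponent S b₀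
    · obtain ⟨c, hcC, hcr⟩ := hmeet
      have hsub : IsSubact S {x : ↥(ActComponent S b₀) | x.1 ∈ C} :=
        ⟨⟨⟨c, hcr⟩, hcC⟩, fun x hx s => hC.2 x.1 hx s⟩
      obtain ⟨g', hg', heq⟩ := hQ _ (comp_indec b₀) _ hsub (fun x => f x.1)
        (fun x hx s => hf x.1 hx s)
      exact ⟨g', hg', fun x hx => heq hx⟩
    · exact ⟨fun _ => z, fun x s => (hz s).symm, fun x hx => absurd ⟨x.1, hx, x.2⟩ hmeet⟩
  letI sd : Setoid B := ⟨Relation.EqvGen (ActRel S), Relation.EqvGen.is_equivalence _⟩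
  have hσr : ∀ b' : B, b' ∈ ActComponent S (Quotient.mk sd b').out :=
    fun b' => Quotient.mk_out b'
  have hσs : ∀ (b' : B) (s : S), (Quotient.mk sd (b' ⊛ s)).out = (Quotient.mk sd b').out :=
    fun b' s => congrArg Quotient.out
      (Quotient.sound (Relation.EqvGen.symm _ _ (.rel _ _ ⟨s, rfl⟩)))
  have Fc : ∀ (b₀ b₁ : B) (e : b₀ = b₁) (x : B) (h : x ∈ ActComponent S b₀)
      (h' : x ∈ ActComponent S b₁), (key b₀).choose ⟨x, h⟩ = (key b₁).choose ⟨x, h'⟩ := by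
    intro b₀ b₁ e
    subst e
    intro x h h'
    rfl
  refine ⟨fun b' => (key (Quotient.mk sd b').out).choose ⟨b', hσr b'⟩, ?_, ?_⟩
  · intro b' s
    have hmem : b' ⊛ s ∈ ActComponent S (Quotient.mk sd b').out :=
      Relation.EqvGen.trans _ _ _ (hσr b') (.rel _ _ ⟨s, rfl⟩)
    have h1 := Fc _ _ (hσs b' s) (b' ⊛ s) (hσr (b' ⊛ s)) hmem
    have h2 := (key (Quotient.mk sd b').out).choose_spec.1 ⟨b', hσr b'⟩ s
    exact h1.trans h2
  · intro c hcC
    exact (key (Quotient.mk sd c).out).choose_spec.2 ⟨c, hσr c⟩ hcC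

end ActTfaeAux
/-- TFAE: (i) InC-injective ⟹ InD-injective; (ii) InC-injective ⟹
PInD-injective; (iii) InC-injective ⟹ injective; (iv) `S` is not left reversible or has
a left zero; (v) indecomposable components of injective acts are injective; (vi)
indecomposable components of injective acts are InD-injective. -/
theorem inCInjective_injective_tfae (S : Type u) [Monoid S] :
    List.TFAE [
      ∀ (Q : Type u) [RightAct S Q], InCInjective S Q → InDInjective S Q,
      ∀ (Q : Type u) [RightAct S Q], InCInjective S Q → PInDInjective S Q,
      ∀ (Q : Type u) [RightAct S Q], InCInjective S Q → ActInjective S Q,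
      ¬ LeftReversible S ∨ ∃ z : S, IsLeftZero S z,
      ∀ (Q : Type u) [RightAct S Q], ActInjective S Q →
        ∀ a : Q, ActInjectiveSet S (ActComponent S a),
      ∀ (Q : Type u) [RightAct S Q], ActInjective S Q →
        ∀ a : Q, InDInjectiveSet S (ActComponent S a) ] := by
  classical
  tfae_have 3 → 1 := by
    intro h3 Q _ hQ B _ C hC _ f hf
    exact h3 Q hQ B C hC f hf
  tfae_have 1 → 2 := by
    intro h1 Q _ hQ B _ C hC hCi f hf _
    exact h1 Q hQ B C hC hCi f hf
  tfae_have 4 → 3 := by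
    intro h4 Q _ hQ
    obtain ⟨q0⟩ := RightAct.nonempty (S := S) (A := Q)
    obtain ⟨z, _, hz⟩ := ActTfaeAux.zcomb h4 hQ q0
    exact ActTfaeAux.lemA hQ z hz
  tfae_have 2 → 4 := by
    intro h2
    by_contra h4
    push_neg at h4
    obtain ⟨hrev, hnz⟩ := h4
    -- the component of the identity in `S → S` is InC-injective but not PInD-injective
    have hQ' : InCInjective S ↥(ActComponent S (fun t : S => t)) := by
      intro B _ hB C hC f hf
      obtain ⟨g₀, hg₀, heq₀⟩ := ActTfaeAux.inj_funAct (S := S) B C hC (fun x => (f x).1)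
        (fun c hc s => congrArg Subtype.val (hf c hc s))
      obtain ⟨c0, hc0⟩ := hC.1
      have himg : ∀ x : B, g₀ x ∈ ActComponent S (fun t : S => t) := by
        intro x
        have h1 : Relation.EqvGen (ActRel S) (g₀ c0) (g₀ x) :=
          ActTfaeAux.hom_eqvGen hg₀ (ActTfaeAux.allrel_of_indec hB c0 x)
        rw [heq₀ hc0] at h1
        exact .trans _ _ _ (f c0).2 h1
      refine ⟨fun x => ⟨g₀ x, himg x⟩, fun x s => Subtype.ext (hg₀ x s),
        fun c hc => Subtype.ext ?_⟩
      exact heq₀ hc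
    have hP := h2 _ hQ'
    set e' : ↥(ActComponent S (fun t : S => t)) := ⟨fun t : S => t, Relation.EqvGen.refl _⟩
    have hC : IsSubact S {x : Option ↥(ActComponent S (fun t : S => t)) | ∃ d, x = some d} := by
      refine ⟨⟨some e', e', rfl⟩, ?_⟩
      rintro x ⟨d, rfl⟩ s
      exact ⟨d ⊛ s, rfl⟩
    have hCi : IndecomposableSet S
        {x : Option ↥(ActComponent S (fun t : S => t)) | ∃ d, x = some d} := by
      apply ActTfaeAux.indecSet_of_common
      rintro x ⟨d, rfl⟩ y ⟨d', rfl⟩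
      have h1 : Relation.EqvGen (ActRel S) d.1 d'.1 := .trans _ _ _ (.symm _ _ d.2) d'.2
      obtain ⟨s, t, hst⟩ := ActTfaeAux.common_of_eqvGen hrev h1
      exact ⟨s, t, congrArg some (Subtype.ext hst)⟩
    have hf : IsActHomOn S (fun x : Option ↥(ActComponent S (fun t : S => t)) => x.getD e')
        {x | ∃ d, x = some d} := by
      rintro x ⟨d, rfl⟩ s
      rfl
    have hinj : Set.InjOn (fun x : Option ↥(ActComponent S (fun t : S => t)) => x.getD e')
        {x | ∃ d, x = some d} := by
      rintro x ⟨d, rfl⟩ y ⟨d', rfl⟩ h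
      simp only [Option.getD_some] at h
      rw [h]
    obtain ⟨g, hg, heq⟩ := hP _ _ hC hCi _ hf hinj
    have hz : IsZeroElem S (g none).1 := fun s => congrArg Subtype.val (hg none s).symm
    exact ActTfaeAux.no_zero_in_comp hrev hnz (g none).2 hz
  tfae_have 4 → 5 := by
    intro h4 Q _ hQ a
    have hQC : InCInjective S Q := fun B _ _ C hC f hf => hQ B C hC f hf
    obtain ⟨z, hza, hz⟩ := ActTfaeAux.zcomb h4 hQC a
    intro B _ C hC f hf hfD
    obtain ⟨g₀, hg₀, heq⟩ := hQ B C hC f hf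
    refine ⟨fun x => if g₀ x ∈ ActComponent S a then g₀ x else z, ?_, ?_, ?_⟩
    · intro x s
      by_cases h : g₀ x ∈ ActComponent S a
      · have h' : g₀ (x ⊛ s) ∈ ActComponent S a := by
          rw [hg₀ x s]
          exact .trans _ _ _ h (.rel _ _ ⟨s, rfl⟩)
        simp only [if_pos h', if_pos h]
        exact hg₀ x s
      · have h' : g₀ (x ⊛ s) ∉ ActComponent S a := by
          rw [hg₀ x s]
          intro hmem
          exact h (.trans _ _ _ hmem (.symm _ _ (.rel _ _ ⟨s, rfl⟩)))
        simp only [if_neg h', if_neg h]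
        exact (hz s).symm
    · intro x
      by_cases h : g₀ x ∈ ActComponent S a
      · simp only [if_pos h]; exact h
      · simp only [if_neg h]; exact hza
    · intro c hc
      have hm : g₀ c ∈ ActComponent S a := by rw [heq hc]; exact hfD c hc
      simp only [if_pos hm]
      exact heq hc
  tfae_have 5 → 6 := by
    intro h5 Q _ hQ a B _ C hC _ f hf hfD
    exact h5 Q hQ a B C hC f hf hfD
  tfae_have 6 → 4 := by
    intro h6
    by_contra h4
    push_neg at h4
    obtain ⟨hrev, hnz⟩ := h4
    have h := h6 (S → S) ActTfaeAux.inj_funAct (fun t : S => t)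
    set e' : ↥(ActComponent S (fun t : S => t)) := ⟨fun t : S => t, Relation.EqvGen.refl _⟩
    have hC : IsSubact S {x : Option (S → S) |
        ∃ d, d ∈ ActComponent S (fun t : S => t) ∧ x = some d} := by
      refine ⟨⟨some (fun t : S => t), _, Relation.EqvGen.refl _, rfl⟩, ?_⟩
      rintro x ⟨d, hd, rfl⟩ s
      exact ⟨d ⊛ s, .trans _ _ _ hd (.rel _ _ ⟨s, rfl⟩), rfl⟩
    have hCi : IndecomposableSet S {x : Option (S → S) |
        ∃ d, d ∈ ActComponent S (fun t : S => t) ∧ x = some d} := by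
      apply ActTfaeAux.indecSet_of_common
      rintro x ⟨d, hd, rfl⟩ y ⟨d', hd', rfl⟩
      have h1 : Relation.EqvGen (ActRel S) d d' := .trans _ _ _ (.symm _ _ hd) hd'
      obtain ⟨s, t, hst⟩ := ActTfaeAux.common_of_eqvGen hrev h1
      exact ⟨s, t, congrArg some hst⟩
    have hf : IsActHomOn S (fun x : Option (S → S) => x.getD (fun t : S => t))
        {x | ∃ d, d ∈ ActComponent S (fun t : S => t) ∧ x = some d} := by
      rintro x ⟨d, hd, rfl⟩ s
      rfl
    have hfD : ∀ c ∈ {x : Option (S → S) |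
        ∃ d, d ∈ ActComponent S (fun t : S => t) ∧ x = some d},
        (fun x : Option (S → S) => x.getD (fun t : S => t)) c
          ∈ ActComponent S (fun t : S => t) := by
      rintro c ⟨d, hd, rfl⟩
      exact hd
    obtain ⟨g, hg, himg, heq⟩ := h _ _ hC hCi _ hf hfD
    have hz : IsZeroElem S (g none) := fun s => (hg none s).symm
    exact ActTfaeAux.no_zero_in_comp hrev hnz (himg none) hz
  tfae_finish
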